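/- arXiv:1112.0594 — 6 statements merged into one kernel-verified Lean document; each statement's English description precedes it below -/
import Mathlib

section
/- Let g, h ∈ ℝ with g > 0, h ≥ 0, f ∈ ℝ with 0 ≤ f, f² ≤ 4, h ≥ 2 - g and 2g ≥ f. If f² - 4gh ≥ 0, then both roots λ_± = (f ± √(f² - 4gh))/(2g) of the quadratic gλ² - fλ + h = 0 satisfy |λ_±| ≤ 1. -/
/-!
Since `f ≥ 0` and `√(f² - 4gh) ≥ 0`, both numerators `f ± √(f² - 4gh)` lie in `[-2g, 2g]` as
soon as `√(f² - 4gh) ≤ 2g - f`. Squaring, this is `f ≤ g + h`, which holds because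
`f ≤ 2 ≤ g + h`.
-/

theorem abs_div_le_one_of_abs_le {K : Type*} [Field K] [LinearOrder K] [IsStrictOrderedRing K]
    {a b : K} (hb : 0 < b) (h : |a| ≤ b) : |a / b| ≤ 1 := by
  rwa [abs_div, abs_of_pos hb, div_le_one hb]

theorem abs_add_le_and_abs_sub_le {K : Type*} [CommRing K] [LinearOrder K] [IsStrictOrderedRing K]
    {x y c : K} (hx : 0 ≤ x) (hy : 0 ≤ y) (hxy : x + y ≤ c) :
    |x + y| ≤ c ∧ |x - y| ≤ c := by
  refine ⟨abs_le.2 ⟨?_, hxy⟩, abs_le.2 ⟨?_, ?_⟩⟩ <;> linarith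

theorem Real.sqrt_discrim_le {f g h : ℝ} (hg : 0 < g) (hgf : f ≤ 2 * g) (hfgh : f ≤ g + h) :
    √(f ^ 2 - 4 * g * h) ≤ 2 * g - f :=
  Real.sqrt_le_iff.2 ⟨by linarith, by nlinarith⟩

theorem real_eigenvalue_case_general (f g h : ℝ) (hg : g > 0)
    (hf0 : 0 ≤ f) (hf4 : f ^ 2 ≤ 4) (hhg : h ≥ 2 - g) (hgf : 2 * g ≥ f) :
    |(f + Real.sqrt (f ^ 2 - 4 * g * h)) / (2 * g)| ≤ 1 ∧
    |(f - Real.sqrt (f ^ 2 - 4 * g * h)) / (2 * g)| ≤ 1 := by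
  have hf2 : f ≤ 2 := abs_le_of_sq_le_sq' (by linarith) zero_le_two |>.2
  have hsqrt := Real.sqrt_discrim_le hg hgf (by linarith : f ≤ g + h)
  have h2g : 0 < 2 * g := by positivity
  obtain ⟨hplus, hminus⟩ :=
    abs_add_le_and_abs_sub_le hf0 (Real.sqrt_nonneg _) (by linarith : f + _ ≤ 2 * g)
  exact ⟨abs_div_le_one_of_abs_le h2g hplus, abs_div_le_one_of_abs_le h2g hminus⟩

theorem real_eigenvalue_case (f g h : ℝ) (hg : g > 0) (hh : h ≥ 0)
    (hf0 : 0 ≤ f) (hf4 : f ^ 2 ≤ 4) (hhg : h ≥ 2 - g) (hgf : 2 * g ≥ f)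
    (hdisc : f ^ 2 - 4 * g * h ≥ 0) :
    |(f + Real.sqrt (f ^ 2 - 4 * g * h)) / (2 * g)| ≤ 1 ∧
    |(f - Real.sqrt (f ^ 2 - 4 * g * h)) / (2 * g)| ≤ 1 :=
  real_eigenvalue_case_general f g h hg hf0 hf4 hhg hgf
end

section
/- Under the hypotheses of the previous context with Δt ≤ 1/c, every eigenvalue λ of the amplification matrix A(ξ) = [[f(ξ)/g(ξ), -h(ξ)/g(ξ)], [1, 0]] satisfies |λ| ≤ 1; that is, ρ(A(ξ)) ≤ 1 for all ξ ∈ [0, π]. -/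
/-!
The eigenvalues are the roots of `g λ² - f λ + h = 0`, and this real quadratic satisfies the
Schur–Cohn conditions `0 < g`, `h ≤ g`, `|f| ≤ g + h`: indeed `g - h = 4βΔt sin²(ξ/2) + γΔt`,
`g + h - f = 4c²Δt² sin²(ξ/2) + m²Δt²` and `g + h + f = 4 + m²Δt²`. A non-real root then has
`|λ|² = h / g ≤ 1`, while a real root lies in `[-1, 1]` because the quadratic is nonnegative
at `±1` and its vertex `f / (2g)` lies in `[-1, 1]`.
-/

theorem Matrix.mem_spectrum_companion_iff {K : Type*} [Field K] (p q lam : K) :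
    lam ∈ spectrum K (Matrix.of ![![p, q], ![1, 0]]) ↔ lam ^ 2 - p * lam - q = 0 := by
  have hdet : (algebraMap K (Matrix (Fin 2) (Fin 2) K) lam - Matrix.of ![![p, q], ![1, 0]]).det =
      lam ^ 2 - p * lam - q := by
    simp [Matrix.det_fin_two, Matrix.algebraMap_matrix_apply]
    ring
  rw [spectrum.mem_iff, Matrix.isUnit_iff_isUnit_det, isUnit_iff_ne_zero, not_not, hdet]

theorem mem_spectrum_amplification_iff {K : Type*} [Field K] {F G H : K} (hG : G ≠ 0)
    (lam : K) :
    lam ∈ spectrum K (Matrix.of ![![F / G, -(H / G)], ![1, 0]]) ↔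
      G * lam ^ 2 - F * lam + H = 0 := by
  have hdiv : lam ^ 2 - F / G * lam - -(H / G) = (G * lam ^ 2 - F * lam + H) / G := by
    field_simp
    ring
  rw [Matrix.mem_spectrum_companion_iff, hdiv, div_eq_zero_iff, or_iff_left hG]

section QuadraticRoots

variable {F G H : ℝ} (hG : 0 < G) (hH : H ≤ G) (hF : |F| ≤ G + H)
include hG hH hF

theorem abs_le_one_of_quadratic_eq_zero {a : ℝ} (ha : G * a ^ 2 - F * a + H = 0) :
    |a| ≤ 1 := by
  obtain ⟨hF₁, hF₂⟩ := abs_le.mp hF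
  refine abs_le.mpr ⟨?_, ?_⟩ <;> by_contra! ha₁
  · nlinarith [mul_pos (by linarith : 0 < -1 - a) (by nlinarith : 0 < F - G * (a - 1))]
  · nlinarith [mul_pos (by linarith : 0 < a - 1) (by nlinarith : 0 < G * (a + 1) - F)]

theorem norm_le_one_of_quadratic_eq_zero {z : ℂ} (hz : G * z ^ 2 - F * z + H = 0) :
    ‖z‖ ≤ 1 := by
  have hre := congrArg Complex.re hz
  have him := congrArg Complex.im hz
  simp only [pow_two, Complex.mul_re, Complex.mul_im, Complex.sub_re, Complex.sub_im,
    Complex.add_re, Complex.add_im, Complex.ofReal_re, Complex.ofReal_im, Complex.zero_re,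
    Complex.zero_im] at hre him
  rcases eq_or_ne z.im 0 with hb | hb
  · rw [← Complex.re_add_im z, hb, Complex.ofReal_zero, zero_mul, add_zero, Complex.norm_real,
      Real.norm_eq_abs]
    exact abs_le_one_of_quadratic_eq_zero hG hH hF (by rw [hb] at hre; linear_combination hre)
  · have hre_eq : 2 * G * z.re = F := mul_left_cancel₀ hb (by linear_combination him)
    have hnormSq : G * Complex.normSq z = H := by
      rw [Complex.normSq_apply]; linear_combination -hre + z.re * hre_eq
    rw [← sq_le_one_iff₀ (norm_nonneg z), Complex.sq_norm]
    nlinarith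

end QuadraticRoots

theorem spectral_radius_le_one_general (c m β γ dt : ℝ)
    (hβ : β ≥ 0) (hγ : γ ≥ 0) (hdt : dt > 0)
    (f g h : ℝ → ℝ)
    (hf : ∀ ξ, f ξ = 2 - 2 * c ^ 2 * dt ^ 2 * Real.sin (ξ / 2) ^ 2)
    (hg : ∀ ξ, g ξ = 1 + (c ^ 2 * dt ^ 2 + 2 * β * dt) * Real.sin (ξ / 2) ^ 2
        + (m ^ 2 * dt ^ 2 + γ * dt) / 2)
    (hh : ∀ ξ, h ξ = 1 + (c ^ 2 * dt ^ 2 - 2 * β * dt) * Real.sin (ξ / 2) ^ 2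
        + (m ^ 2 * dt ^ 2 - γ * dt) / 2) :
    ∀ ξ ∈ Set.Icc (0 : ℝ) Real.pi,
      ∀ lam ∈ spectrum ℂ (Matrix.of
        ![![(f ξ / g ξ : ℂ), (-(h ξ / g ξ) : ℂ)], ![(1 : ℂ), (0 : ℂ)]]),
        ‖lam‖ ≤ 1 := by
  intro ξ _ lam hlam
  have hS : 0 ≤ Real.sin (ξ / 2) ^ 2 := sq_nonneg _
  have hβdt : 0 ≤ β * dt := by positivity
  have hγdt : 0 ≤ γ * dt := by positivity
  have hg_pos : 0 < g ξ := by rw [hg]; positivity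
  have hhg : h ξ ≤ g ξ := by rw [hg, hh]; nlinarith
  have hfgh : |f ξ| ≤ g ξ + h ξ := by
    rw [abs_le]
    constructor <;> rw [hf, hg, hh] <;>
      nlinarith [mul_nonneg (sq_nonneg (c * dt)) hS, sq_nonneg (m * dt)]
  rw [mem_spectrum_amplification_iff (by exact_mod_cast hg_pos.ne')] at hlam
  exact norm_le_one_of_quadratic_eq_zero hg_pos hhg hfgh hlam

theorem spectral_radius_le_one (c m β γ dt : ℝ)
    (hc : c > 0) (hm : m ≥ 0) (hβ : β ≥ 0) (hγ : γ ≥ 0) (hdt : dt > 0)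
    (hcfl : dt ≤ 1 / c)
    (f g h : ℝ → ℝ)
    (hf : ∀ ξ, f ξ = 2 - 2 * c ^ 2 * dt ^ 2 * Real.sin (ξ / 2) ^ 2)
    (hg : ∀ ξ, g ξ = 1 + (c ^ 2 * dt ^ 2 + 2 * β * dt) * Real.sin (ξ / 2) ^ 2
        + (m ^ 2 * dt ^ 2 + γ * dt) / 2)
    (hh : ∀ ξ, h ξ = 1 + (c ^ 2 * dt ^ 2 - 2 * β * dt) * Real.sin (ξ / 2) ^ 2
        + (m ^ 2 * dt ^ 2 - γ * dt) / 2) :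
    ∀ ξ ∈ Set.Icc (0 : ℝ) Real.pi,
      ∀ lam ∈ spectrum ℂ (Matrix.of
        ![![(f ξ / g ξ : ℂ), (-(h ξ / g ξ) : ℂ)], ![(1 : ℂ), (0 : ℂ)]]),
        ‖lam‖ ≤ 1 :=
  spectral_radius_le_one_general c m β γ dt hβ hγ hdt f g h hf hg hh
end

section
/- Let c, m, β, γ ≥ 0 and Δt > 0 with 2/γ < Δt (γ > 0). For ξ ∈ [0, π] define g(ξ) = 1 + (c²Δt² + 2βΔt) sin²(ξ/2) + (m²Δt² + γΔt)/2 and h(ξ) = 1 + (c²Δt² - 2βΔt) sin²(ξ/2) + (m²Δt² - γΔt)/2. Then g(ξ) - h(ξ) ≥ 2 for all ξ ∈ [0, π], and consequently |f(ξ)/g(ξ)| + |h(ξ)/g(ξ)| ≤ 1 whenever |f(ξ)| ≤ 2; in particular the infinity norm of the amplification matrix A(ξ) is at most 1. -/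
theorem abs_div_add_abs_div_le_one {f g h : ℝ} (hsum : 2 ≤ g + h) (hdiff : 2 ≤ g - h)
    (hf : |f| ≤ 2) : |f / g| + |h / g| ≤ 1 := by
  have hg : 0 < g := by linarith
  have habs_h : |h| ≤ g - 2 := abs_le.mpr ⟨by linarith, by linarith⟩
  rw [abs_div, abs_div, abs_of_pos hg, ← add_div, div_le_one hg]
  linarith

theorem infinity_norm_stability_general (c m β γ dt : ℝ)
    (hβ : β ≥ 0) (hγ : γ > 0) (hdt : dt > 0)
    (hcond : 2 / γ < dt)
    (g h : ℝ → ℝ)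
    (hg : ∀ ξ, g ξ = 1 + (c ^ 2 * dt ^ 2 + 2 * β * dt) * Real.sin (ξ / 2) ^ 2
        + (m ^ 2 * dt ^ 2 + γ * dt) / 2)
    (hh : ∀ ξ, h ξ = 1 + (c ^ 2 * dt ^ 2 - 2 * β * dt) * Real.sin (ξ / 2) ^ 2
        + (m ^ 2 * dt ^ 2 - γ * dt) / 2) :
    ∀ ξ ∈ Set.Icc (0 : ℝ) Real.pi,
      g ξ - h ξ ≥ 2 ∧
      ∀ fval : ℝ, |fval| ≤ 2 → |fval / g ξ| + |h ξ / g ξ| ≤ 1 := by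
  intro ξ _
  have hγdt : 2 < γ * dt := (div_lt_iff₀' hγ).mp hcond
  have hdiff : 2 ≤ g ξ - h ξ := by
    have : 0 ≤ β * dt * Real.sin (ξ / 2) ^ 2 := by positivity
    rw [hg, hh]
    linarith
  have hsum : 2 ≤ g ξ + h ξ := by
    have : 0 ≤ c ^ 2 * dt ^ 2 * Real.sin (ξ / 2) ^ 2 := by positivity
    have : 0 ≤ m ^ 2 * dt ^ 2 := by positivity
    rw [hg, hh]
    linarith
  exact ⟨hdiff, fun _ hf => abs_div_add_abs_div_le_one hsum hdiff hf⟩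

theorem infinity_norm_stability (c m β γ dt : ℝ)
    (hc : c ≥ 0) (hm : m ≥ 0) (hβ : β ≥ 0) (hγ : γ > 0) (hdt : dt > 0)
    (hcond : 2 / γ < dt)
    (g h : ℝ → ℝ)
    (hg : ∀ ξ, g ξ = 1 + (c ^ 2 * dt ^ 2 + 2 * β * dt) * Real.sin (ξ / 2) ^ 2
        + (m ^ 2 * dt ^ 2 + γ * dt) / 2)
    (hh : ∀ ξ, h ξ = 1 + (c ^ 2 * dt ^ 2 - 2 * β * dt) * Real.sin (ξ / 2) ^ 2
        + (m ^ 2 * dt ^ 2 - γ * dt) / 2) :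
    ∀ ξ ∈ Set.Icc (0 : ℝ) Real.pi,
      g ξ - h ξ ≥ 2 ∧
      ∀ fval : ℝ, |fval| ≤ 2 → |fval / g ξ| + |h ξ / g ξ| ≤ 1 :=
  infinity_norm_stability_general c m β γ dt hβ hγ hdt hcond g h hg hh
end

section
/- Let c, m, β, γ ≥ 0 and Δt > 0, and set f(ξ) = 2 (constant), g(ξ) = 1 + (c²Δt² + 2βΔt) sin²(ξ/2) + (m²Δt² + γΔt)/2, h(ξ) = 1 + (c²Δt² - 2βΔt) sin²(ξ/2) + (m²Δt² - γΔt)/2. If 2/γ ≤ Δt ≤ 1/c then for every ξ ∈ [0, π] the roots of g(ξ)λ² - 2λ + h(ξ) = 0 have modulus at most 1. -/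
/-! Both roots of `a λ² - 2λ + b` lie in the closed unit disc as soon as `b ≤ a` and `2 ≤ a + b`.
Non-real roots come in a conjugate pair with product `b / a`, so `|λ|² = b / a ≤ 1`. A real root
lies in `[-1, 1]`: the polynomial is nonnegative at `±1` and monotone outside `[-1, 1]`, since its
vertex `1 / a` lies in `(0, 1]`. For the scheme, `g - h = 4βΔt sin²(ξ/2) + γΔt ≥ 0` and
`g + h = 2 + 2c²Δt² sin²(ξ/2) + m²Δt² ≥ 2`. -/

lemma abs_le_one_of_quadratic_eq_zero_s11 {a b x : ℝ} (ha : 1 ≤ a) (hab : 2 ≤ a + b)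
    (hx : a * x ^ 2 - 2 * x + b = 0) : |x| ≤ 1 := by
  have key : a * x ^ 2 - 2 * x + b = (x - 1) * (a * (x + 1) - 2) + (a + b - 2) := by ring
  rw [abs_le]
  constructor
  · by_contra! hlt
    nlinarith [mul_pos_of_neg_of_neg (by linarith : x - 1 < 0) (by nlinarith : a * (x + 1) - 2 < 0)]
  · by_contra! hlt
    nlinarith [mul_pos (by linarith : 0 < x - 1) (by nlinarith : 0 < a * (x + 1) - 2)]

theorem Complex.norm_le_one_of_quadratic_eq_zero {a b : ℝ} (hba : b ≤ a) (hab : 2 ≤ a + b)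
    {z : ℂ} (hz : (a : ℂ) * z ^ 2 - 2 * z + b = 0) : ‖z‖ ≤ 1 := by
  have hre : a * (z.re ^ 2 - z.im ^ 2) - 2 * z.re + b = 0 := by
    simpa [sq] using congrArg Complex.re hz
  have him : z.im * (a * z.re - 1) = 0 := by
    have := congrArg Complex.im hz
    simp only [sq, sub_im, add_im, mul_im, ofReal_re, ofReal_im, mul_re, re_ofNat, im_ofNat, zero_im,
      zero_mul, add_zero] at this
    linear_combination this / 2
  have hnormSq : z.re ^ 2 + z.im ^ 2 ≤ 1 := by
    rcases mul_eq_zero.1 him with hreal | hvertex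
    · rw [hreal] at hre ⊢
      have := abs_le_one_of_quadratic_eq_zero_s11 (x := z.re) (by linarith) hab (by linarith)
      nlinarith [abs_le.1 this]
    · have : a * (z.re ^ 2 + z.im ^ 2) = b := by linear_combination -hre + 2 * z.re * hvertex
      nlinarith
  rw [← sq_le_one_iff₀ (norm_nonneg z), Complex.sq_norm, Complex.normSq_apply]
  nlinarith

theorem first_scheme_roots_modulus_le_one_general (c m β γ dt : ℝ)
    (hβ : β ≥ 0) (hγ : γ ≥ 0) (hdt : dt > 0)
    (g h : ℝ → ℝ)
    (hg : ∀ ξ, g ξ = 1 + (c ^ 2 * dt ^ 2 + 2 * β * dt) * Real.sin (ξ / 2) ^ 2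
        + (m ^ 2 * dt ^ 2 + γ * dt) / 2)
    (hh : ∀ ξ, h ξ = 1 + (c ^ 2 * dt ^ 2 - 2 * β * dt) * Real.sin (ξ / 2) ^ 2
        + (m ^ 2 * dt ^ 2 - γ * dt) / 2) :
    ∀ ξ ∈ Set.Icc (0 : ℝ) Real.pi,
      ∀ lam : ℂ, (g ξ : ℂ) * lam ^ 2 - 2 * lam + (h ξ : ℂ) = 0 →
        ‖lam‖ ≤ 1 := by
  intro ξ _ lam hroot
  have hs : 0 ≤ Real.sin (ξ / 2) ^ 2 := sq_nonneg _
  have hhg : h ξ ≤ g ξ := by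
    rw [hg, hh]
    nlinarith [mul_nonneg (mul_nonneg hβ hdt.le) hs, mul_nonneg hγ hdt.le]
  have hgh : 2 ≤ g ξ + h ξ := by
    rw [hg, hh]
    nlinarith [mul_nonneg (sq_nonneg (c * dt)) hs, sq_nonneg (m * dt)]
  exact Complex.norm_le_one_of_quadratic_eq_zero hhg hgh hroot

theorem first_scheme_roots_modulus_le_one (c m β γ dt : ℝ)
    (hc : c ≥ 0) (hm : m ≥ 0) (hβ : β ≥ 0) (hγ : γ ≥ 0) (hdt : dt > 0)
    (g h : ℝ → ℝ)
    (hg : ∀ ξ, g ξ = 1 + (c ^ 2 * dt ^ 2 + 2 * β * dt) * Real.sin (ξ / 2) ^ 2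
        + (m ^ 2 * dt ^ 2 + γ * dt) / 2)
    (hh : ∀ ξ, h ξ = 1 + (c ^ 2 * dt ^ 2 - 2 * β * dt) * Real.sin (ξ / 2) ^ 2
        + (m ^ 2 * dt ^ 2 - γ * dt) / 2)
    (hlo : 2 / γ ≤ dt) (hhi : dt ≤ 1 / c) :
    ∀ ξ ∈ Set.Icc (0 : ℝ) Real.pi,
      ∀ lam : ℂ, (g ξ : ℂ) * lam ^ 2 - 2 * lam + (h ξ : ℂ) = 0 →
        ‖lam‖ ≤ 1 :=
  first_scheme_roots_modulus_le_one_general c m β γ dt hβ hγ hdt g h hg hh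
end

section
/- Let (uₙ)ₙ₌₁^N be C² real functions on [0,∞) satisfying üₙ - (c² + β d/dt)Δ²ₓuₙ + γu̇ₙ + m²uₙ + sin uₙ = J for 1 ≤ n ≤ N, with u_{N+1} = u_N for all t, where Δ²ₓuₙ = u_{n+1} - 2uₙ + u_{n-1}. Define Hₙ = ½[u̇ₙ² + c²(u_{n+1} - uₙ)² + m²uₙ²] + (1 - cos uₙ) - Juₙ and E = ∑_{n=1}^N Hₙ + (c²/2)(u₁ - u₀)². Then dE/dt = c²(u₀ - u₁)u̇₀ - β[∑_{n=1}^N (u̇ₙ - u̇_{n-1})² + (u̇₁ - u̇₀)u̇₀] - γ∑_{n=1}^N u̇ₙ². -/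
/-!
Differentiating `E` term by term and substituting the equation of motion for `üₙ` leaves
`∑ u̇ₙ (c² Δ²uₙ + β Δ²u̇ₙ - γ u̇ₙ)` plus the derivative of the spring energy. Summation by parts
turns `∑ u̇ₙ Δ²uₙ` into minus that spring derivative plus boundary terms, and `∑ u̇ₙ Δ²u̇ₙ` into
`-∑ (u̇ₙ - u̇ₙ₋₁)²` plus boundary terms. The free end `u_{N+1} = u_N` (hence `u̇_{N+1} = u̇_N`) kills
the boundary terms at `N`, leaving only the flux through the driven end `n = 0`.
-/

open Finset

section SummationByParts

variable {R : Type*} [CommRing R]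

/-- `n - 1` truncates at `0`; only `n ≥ 1` is ever used. -/
def discreteLaplacian (a : ℕ → R) (n : ℕ) : R :=
  a (n + 1) - 2 * a n + a (n - 1)

theorem sum_Icc_mul_discreteLaplacian (a b : ℕ → R) (N : ℕ) :
    ∑ n ∈ Icc 1 N, b n * discreteLaplacian a n =
      b (N + 1) * (a (N + 1) - a N) - b 1 * (a 1 - a 0)
        - ∑ n ∈ Icc 1 N, (b (n + 1) - b n) * (a (n + 1) - a n) := by
  induction N with
  | zero => simp
  | succ N ih =>
    rw [sum_Icc_succ_top (by omega), sum_Icc_succ_top (by omega), ih, discreteLaplacian,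
      Nat.add_sub_cancel]
    ring

theorem sum_Icc_sub_pred_sq (b : ℕ → R) (N : ℕ) :
    ∑ n ∈ Icc 1 N, (b n - b (n - 1)) ^ 2 =
      (b 1 - b 0) ^ 2 + ∑ n ∈ Icc 1 N, (b (n + 1) - b n) ^ 2 - (b (N + 1) - b N) ^ 2 := by
  induction N with
  | zero => simp
  | succ N ih =>
    rw [sum_Icc_succ_top (by omega), sum_Icc_succ_top (by omega), ih, Nat.add_sub_cancel]
    ring

/-- Power balance of a damped chain with positions `a` and velocities `b`: with a free end at `N`,
only the flux through `n = 0` and the dissipation remain. -/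
theorem sum_Icc_damped_chain_power (c β γ : R) (a b : ℕ → R) (N : ℕ)
    (ha : a (N + 1) = a N) (hb : b (N + 1) = b N) :
    ∑ n ∈ Icc 1 N, (b n * (c ^ 2 * discreteLaplacian a n + β * discreteLaplacian b n - γ * b n)
        + c ^ 2 * (a (n + 1) - a n) * (b (n + 1) - b n))
      + c ^ 2 * (b 1 - b 0) * (a 1 - a 0) =
    c ^ 2 * (a 0 - a 1) * b 0
      - β * ((∑ n ∈ Icc 1 N, (b n - b (n - 1)) ^ 2) + (b 1 - b 0) * b 0)
      - γ * ∑ n ∈ Icc 1 N, b n ^ 2 := by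
  have hsplit : ∑ n ∈ Icc 1 N, (b n * (c ^ 2 * discreteLaplacian a n
        + β * discreteLaplacian b n - γ * b n) + c ^ 2 * (a (n + 1) - a n) * (b (n + 1) - b n)) =
      c ^ 2 * (∑ n ∈ Icc 1 N, b n * discreteLaplacian a n
          + ∑ n ∈ Icc 1 N, (b (n + 1) - b n) * (a (n + 1) - a n))
        + β * ∑ n ∈ Icc 1 N, b n * discreteLaplacian b n - γ * ∑ n ∈ Icc 1 N, b n ^ 2 := by
    simp only [← sum_add_distrib, mul_sum, ← sum_sub_distrib]
    exact sum_congr rfl fun n _ => by ring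
  rw [hsplit, sum_Icc_mul_discreteLaplacian a b, sum_Icc_mul_discreteLaplacian b b,
    sum_Icc_sub_pred_sq, ha, hb]
  simp only [← sq]
  ring

end SummationByParts

theorem HasDerivAt.sineGordon_site_energy {f g v : ℝ → ℝ} {f' g' v' t : ℝ} (c msq J : ℝ)
    (hf : HasDerivAt f f' t) (hg : HasDerivAt g g' t) (hv : HasDerivAt v v' t) :
    HasDerivAt (fun t => 1 / 2 * (v t ^ 2 + c ^ 2 * (g t - f t) ^ 2 + msq * f t ^ 2)
        + (1 - Real.cos (f t)) - J * f t)
      (v t * v' + c ^ 2 * (g t - f t) * (g' - f') + msq * f t * f' + Real.sin (f t) * f'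
        - J * f') t := by
  have h := ((((hv.fun_pow 2).fun_add ((hg.fun_sub hf).fun_pow 2 |>.const_mul (c ^ 2))).fun_add
    ((hf.fun_pow 2).const_mul msq)).const_mul (1 / 2 : ℝ)).fun_add
    ((hasDerivAt_const t 1).fun_sub hf.cos) |>.fun_sub (hf.const_mul J)
  exact h.congr_deriv (by ring_nf)

/-- Rate of change of the total energy for the damped, driven sine-Gordon
chain with mass and Josephson current. -/
theorem damped_energy_rate (N : ℕ) (c β γ J msq : ℝ)
    (u u' u'' : ℕ → ℝ → ℝ) (E : ℝ → ℝ)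
    (hu : ∀ n t, HasDerivAt (u n) (u' n t) t)
    (hu' : ∀ n t, HasDerivAt (u' n) (u'' n t) t)
    (heq : ∀ n, 1 ≤ n → n ≤ N → ∀ t : ℝ,
      u'' n t
        - (c ^ 2 * (u (n + 1) t - 2 * u n t + u (n - 1) t)
            + β * (u' (n + 1) t - 2 * u' n t + u' (n - 1) t))
        + γ * u' n t + msq * u n t + Real.sin (u n t) = J)
    (hbd : ∀ t : ℝ, u (N + 1) t = u N t)
    (hE : ∀ t : ℝ, E t = ∑ n ∈ Finset.Icc 1 N,
        ((1 / 2) * ((u' n t) ^ 2 + c ^ 2 * (u (n + 1) t - u n t) ^ 2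
            + msq * (u n t) ^ 2)
          + (1 - Real.cos (u n t)) - J * u n t)
      + (c ^ 2 / 2) * (u 1 t - u 0 t) ^ 2) :
    ∀ t : ℝ, HasDerivAt E
      (c ^ 2 * (u 0 t - u 1 t) * u' 0 t
        - β * ((∑ n ∈ Finset.Icc 1 N, (u' n t - u' (n - 1) t) ^ 2)
            + (u' 1 t - u' 0 t) * u' 0 t)
        - γ * ∑ n ∈ Finset.Icc 1 N, (u' n t) ^ 2) t := by
  intro t
  have hderiv := (HasDerivAt.fun_sum fun n (_ : n ∈ Icc 1 N) =>
    (hu n t).sineGordon_site_energy c msq J (hu (n + 1) t) (hu' n t)).fun_add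
    ((((hu 1 t).fun_sub (hu 0 t)).fun_pow 2).const_mul (c ^ 2 / 2))
  have hbd' : u' (N + 1) t = u' N t :=
    ((funext hbd : u (N + 1) = u N) ▸ hu (N + 1) t).unique (hu N t)
  rw [funext hE]
  refine hderiv.congr_deriv ?_
  rw [← sum_Icc_damped_chain_power c β γ (u · t) (u' · t) N (hbd t) hbd']
  congr 1
  · refine sum_congr rfl fun n hn => ?_
    obtain ⟨h1, hN⟩ := mem_Icc.mp hn
    simp only [discreteLaplacian]
    linear_combination u' n t * heq n h1 hN t
  · ring
end

section
/- Let Cₖ = (c²/4) ∑_{n=1}^N [((u_{n+1}^{k+1} + u_{n+1}ᵏ)/2 - (uₙ^{k+1} + uₙᵏ)/2)² + ((u_{n-1}^{k+1} + u_{n-1}ᵏ)/2 - (uₙ^{k+1} + uₙᵏ)/2)²] for an array (uₙᵏ) satisfying u_{N+1}ᵏ = u_Nᵏ for all k. Then Cₖ - C_{k-1} = (c²/4){((δ²u₀ᵏ - δ²u₁ᵏ)/4)(δₜu₀ᵏ + δₜu₁ᵏ) - ∑_{n=1}^N ((δ²δ²ₓuₙᵏ)/2)(δₜuₙᵏ)},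 where δ²uₙᵏ = uₙ^{k+1} + 2uₙᵏ + uₙ^{k-1}. -/
open Finset

/-- Discrete Green's identity on `{1, …, N}`: summation by parts for the two one-sided
differences at each node. -/
theorem sum_Icc_sub_mul_sub_add_sub_mul_sub (a b : ℕ → ℝ) (N : ℕ) :
    ∑ n ∈ Icc 1 N,
        ((a (n + 1) - a n) * (b (n + 1) - b n) + (a (n - 1) - a n) * (b (n - 1) - b n))
      = (a (N + 1) + a N) * (b (N + 1) - b N) - (a 1 + a 0) * (b 1 - b 0)
        - 2 * ∑ n ∈ Icc 1 N, (b (n + 1) - 2 * b n + b (n - 1)) * a n := by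
  induction N with
  | zero => simp
  | succ N ih =>
    rw [sum_Icc_succ_top (Nat.le_add_left 1 N), sum_Icc_succ_top (Nat.le_add_left 1 N), ih,
      Nat.add_sub_cancel]
    ring

/-- Algebraic identity for the coupling-energy difference `Cₖ - C_{k-1}`
in the second scheme. -/
theorem coupling_energy_difference_scheme2
    (N : ℕ) (c : ℝ) (u : ℕ → ℕ → ℝ) (C : ℕ → ℝ)
    (hbd : ∀ k, u (N + 1) k = u N k)
    (hC : ∀ k, C k = (c ^ 2 / 4) * ∑ n ∈ Finset.Icc 1 N,
        (((u (n + 1) (k + 1) + u (n + 1) k) / 2 - (u n (k + 1) + u n k) / 2) ^ 2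
          + ((u (n - 1) (k + 1) + u (n - 1) k) / 2 - (u n (k + 1) + u n k) / 2) ^ 2)) :
    ∀ k, 1 ≤ k →
      C k - C (k - 1)
        = (c ^ 2 / 4) *
            ((((u 0 (k + 1) + 2 * u 0 k + u 0 (k - 1))
                  - (u 1 (k + 1) + 2 * u 1 k + u 1 (k - 1))) / 4)
                * ((u 0 (k + 1) - u 0 (k - 1)) + (u 1 (k + 1) - u 1 (k - 1)))
              - ∑ n ∈ Finset.Icc 1 N,
                  ((((u (n + 1) (k + 1) + 2 * u (n + 1) k + u (n + 1) (k - 1))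
                      - 2 * (u n (k + 1) + 2 * u n k + u n (k - 1))
                      + (u (n - 1) (k + 1) + 2 * u (n - 1) k + u (n - 1) (k - 1))) / 2)
                    * (u n (k + 1) - u n (k - 1)))) := by
  intro k hk
  obtain ⟨k, rfl⟩ := Nat.exists_eq_add_of_le' hk
  simp only [Nat.add_sub_cancel]
  -- `a n = δₜuₙᵏ` and `b n = δ²uₙᵏ`; each squared average difference changes by `Δa Δb / 4`.
  set a : ℕ → ℝ := fun n => u n (k + 1 + 1) - u n k
  set b : ℕ → ℝ := fun n => u n (k + 1 + 1) + 2 * u n (k + 1) + u n k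
  have hb : b (N + 1) = b N := by simp only [b, hbd]
  rw [hC, hC, ← mul_sub, ← sum_sub_distrib]
  calc (c ^ 2 / 4) * ∑ n ∈ Icc 1 N, _
      = (c ^ 2 / 4) * (1 / 4 * ∑ n ∈ Icc 1 N,
          ((a (n + 1) - a n) * (b (n + 1) - b n) + (a (n - 1) - a n) * (b (n - 1) - b n))) := by
        congr 1
        rw [mul_sum]
        exact sum_congr rfl fun n _ => by simp only [a, b]; ring
    _ = (c ^ 2 / 4) * ((b 0 - b 1) / 4 * (a 0 + a 1)
          - ∑ n ∈ Icc 1 N, (b (n + 1) - 2 * b n + b (n - 1)) / 2 * a n) := by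
        rw [sum_Icc_sub_mul_sub_add_sub_mul_sub, hb, sub_self, mul_zero, zero_sub]
        simp only [div_mul_eq_mul_div (_ : ℝ) 2, ← sum_div]
        ring
end
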